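/- Let T be a triangulated category with coproducts, let C be a compact object of T, and let X_1 → X_2 → X_3 → ··· be a sequence with homotopy colimit hocolim X_n defined by the triangle ⊕X_n --(1−shift)--> ⊕X_n → hocolim X_n. Then every morphism C → hocolim X_n factors through the canonical map X_i → hocolim X_n for some i. -/

import Mathlib

/-!
By compactness, `Hom(C, ∐ Y)` is the group of finitely supported sequences `(gₙ : C ⟶ Yₙ)`, on
which `shift` acts as `(gₙ)ₙ ↦ (g_{n-1} ≫ φ_{n-1})ₙ`; a finitely supported fixed point of this
vanishes, so `1 − shift` is injective on `Hom(C, ∐ Y)`. Applied to the telescope `X⟦1⟧` (the shift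
functor commutes with coproducts) this kills `f ≫ δ`, so `f` lifts to `∐ X`. A lift is a finite sum of maps through the `Xⱼ`, and
since `π` coequalizes `1` and `shift`, every `Xⱼ → hocolim` factors through `Xᵢ` for `j ≤ i`.
-/

open CategoryTheory Limits Pretriangulated

namespace DFinsupp

variable {A : ℕ → Type*} [∀ n, AddCommMonoid (A n)]

def telescopeShift (ψ : ∀ n, A n →+ A (n + 1)) : (Π₀ n, A n) →+ Π₀ n, A n :=
  sumAddHom fun n => (singleAddHom A (n + 1)).comp (ψ n)

variable (ψ : ∀ n, A n →+ A (n + 1))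

lemma telescopeShift_apply_zero (p : Π₀ n, A n) : telescopeShift ψ p 0 = 0 := by
  induction p using DFinsupp.induction with
  | h0 => simp
  | ha i b r _ _ ih => simpa [telescopeShift, single_apply] using ih

lemma telescopeShift_apply_succ (p : Π₀ n, A n) (n : ℕ) :
    telescopeShift ψ p (n + 1) = ψ n (p n) := by
  induction p using DFinsupp.induction with
  | h0 => simp
  | ha i b r _ _ ih =>
    simp only [telescopeShift, map_add, add_apply, sumAddHom_single, AddMonoidHom.comp_apply,
      singleAddHom_apply] at ih ⊢
    rw [ih]
    rcases eq_or_ne i n with rfl | h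
    · simp
    · simp [h]

lemma eq_zero_of_telescopeShift_eq_self {p : Π₀ n, A n}
    (hp : telescopeShift ψ p = p) : p = 0 := by
  ext n
  induction n with
  | zero => rw [← hp]; exact telescopeShift_apply_zero ψ p
  | succ n ih => rw [← hp, telescopeShift_apply_succ, ih]; exact map_zero (ψ n)

end DFinsupp

section Telescope

variable {T : Type*} [Category T]

noncomputable def telescopeShift (X : ℕ → T) [HasCoproduct X] (φ : ∀ n, X n ⟶ X (n + 1)) :
    ∐ X ⟶ ∐ X :=
  Sigma.desc fun n => φ n ≫ Sigma.ι X (n + 1)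

@[simp]
lemma ι_telescopeShift (X : ℕ → T) [HasCoproduct X] (φ : ∀ n, X n ⟶ X (n + 1)) (n : ℕ) :
    Sigma.ι X n ≫ telescopeShift X φ = φ n ≫ Sigma.ι X (n + 1) :=
  colimit.ι_desc _ _

@[simp]
lemma ι_telescopeShift_assoc (X : ℕ → T) [HasCoproduct X] (φ : ∀ n, X n ⟶ X (n + 1)) (n : ℕ)
    {Z : T} (h : ∐ X ⟶ Z) :
    Sigma.ι X n ≫ telescopeShift X φ ≫ h = φ n ≫ Sigma.ι X (n + 1) ≫ h := by
  rw [← Category.assoc, ι_telescopeShift, Category.assoc]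

lemma telescopeShift_comp_sigmaComparison {U : Type*} [Category U] (F : T ⥤ U) (X : ℕ → T)
    [HasCoproduct X] [HasCoproduct fun n => F.obj (X n)] (φ : ∀ n, X n ⟶ X (n + 1)) :
    telescopeShift (fun n => F.obj (X n)) (fun n => F.map (φ n)) ≫ sigmaComparison F X =
      sigmaComparison F X ≫ F.map (telescopeShift X φ) := by
  refine Sigma.hom_ext _ _ fun n => ?_
  rw [ι_telescopeShift_assoc, ι_comp_sigmaComparison_assoc, ← F.map_comp, ι_telescopeShift,
    F.map_comp, ι_comp_sigmaComparison]

lemma exists_ι_comp_eq_of_le {X : ℕ → T} [HasCoproduct X] (φ : ∀ n, X n ⟶ X (n + 1)) {H : T}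
    {π : ∐ X ⟶ H} (hπ : telescopeShift X φ ≫ π = π) {j i : ℕ} (hji : j ≤ i) :
    ∃ g : X j ⟶ X i, Sigma.ι X j ≫ π = g ≫ Sigma.ι X i ≫ π := by
  have hstep (n : ℕ) : Sigma.ι X n ≫ π = φ n ≫ Sigma.ι X (n + 1) ≫ π := by
    rw [← ι_telescopeShift_assoc, hπ]
  induction i, hji using Nat.le_induction with
  | base => exact ⟨𝟙 _, by rw [Category.id_comp]⟩
  | succ i _ ih =>
    obtain ⟨g, hg⟩ := ih
    exact ⟨g ≫ φ i, by rw [hg, hstep, Category.assoc]⟩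

variable [Preadditive T]

/-- `C` is compact when this map `⊕ⱼ Hom(C, Yⱼ) → Hom(C, ∐ Y)` is bijective for all `Y`. -/
noncomputable def sigmaHomOfDFinsupp (C : T) {J : Type*} [DecidableEq J] (Y : J → T)
    [HasCoproduct Y] : (Π₀ j, C ⟶ Y j) →+ (C ⟶ ∐ Y) :=
  DFinsupp.sumAddHom fun j => Preadditive.rightComp C (Sigma.ι Y j)

@[simp]
lemma sigmaHomOfDFinsupp_single (C : T) {J : Type*} [DecidableEq J] (Y : J → T)
    [HasCoproduct Y] (j : J) (g : C ⟶ Y j) :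
    sigmaHomOfDFinsupp C Y (DFinsupp.single j g) = g ≫ Sigma.ι Y j :=
  DFinsupp.sumAddHom_single _ _ _

lemma sigmaHomOfDFinsupp_telescopeShift (C : T) (Y : ℕ → T) [HasCoproduct Y]
    (φ : ∀ n, Y n ⟶ Y (n + 1)) (p : Π₀ n, C ⟶ Y n) :
    sigmaHomOfDFinsupp C Y (DFinsupp.telescopeShift (fun n => Preadditive.rightComp C (φ n)) p) =
      sigmaHomOfDFinsupp C Y p ≫ telescopeShift Y φ := by
  induction p using DFinsupp.induction with
  | h0 => simp
  | ha i b r _ _ ih =>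
    simpa [DFinsupp.telescopeShift, Preadditive.rightComp, Preadditive.add_comp] using ih

lemma eq_zero_of_comp_one_sub_telescopeShift {C : T} {Y : ℕ → T} [HasCoproduct Y]
    (hC : Function.Bijective (sigmaHomOfDFinsupp C Y)) (φ : ∀ n, Y n ⟶ Y (n + 1))
    {α : C ⟶ ∐ Y} (hα : α ≫ (𝟙 _ - telescopeShift Y φ) = 0) : α = 0 := by
  obtain ⟨p, rfl⟩ := hC.2 α
  have hfix : DFinsupp.telescopeShift (fun n => Preadditive.rightComp C (φ n)) p = p := by
    apply hC.1
    rw [sigmaHomOfDFinsupp_telescopeShift, ← sub_eq_zero, ← neg_eq_zero, neg_sub, ← hα,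
      Preadditive.comp_sub, Category.comp_id]
  rw [DFinsupp.eq_zero_of_telescopeShift_eq_self _ hfix, map_zero]

lemma eq_zero_of_comp_map_one_sub_telescopeShift {U : Type*} [Category U] [Preadditive U]
    (F : T ⥤ U) [F.Additive] {C : U} {X : ℕ → T} [HasCoproduct X]
    [HasCoproduct fun n => F.obj (X n)] [IsIso (sigmaComparison F X)]
    (hC : Function.Bijective (sigmaHomOfDFinsupp C fun n => F.obj (X n)))
    (φ : ∀ n, X n ⟶ X (n + 1)) {α : C ⟶ F.obj (∐ X)}
    (hα : α ≫ F.map (𝟙 _ - telescopeShift X φ) = 0) : α = 0 := by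
  have hcomm : (𝟙 _ - telescopeShift _ fun n => F.map (φ n)) ≫ sigmaComparison F X =
      sigmaComparison F X ≫ F.map (𝟙 _ - telescopeShift X φ) := by
    rw [F.map_sub, F.map_id, Preadditive.sub_comp, Preadditive.comp_sub, Category.id_comp,
      Category.comp_id, telescopeShift_comp_sigmaComparison]
  have h := eq_zero_of_comp_one_sub_telescopeShift hC (fun n => F.map (φ n))
    (α := α ≫ inv (sigmaComparison F X))
    (by rw [← cancel_mono (sigmaComparison F X), Category.assoc, Category.assoc, hcomm,
      IsIso.inv_hom_id_assoc, hα, zero_comp])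
  simpa using h =≫ sigmaComparison F X

lemma exists_comp_eq_of_surjective_sigmaHomOfDFinsupp {C : T} {X : ℕ → T} [HasCoproduct X]
    (hC : Function.Surjective (sigmaHomOfDFinsupp C X)) (φ : ∀ n, X n ⟶ X (n + 1)) {H : T}
    {π : ∐ X ⟶ H} (hπ : telescopeShift X φ ≫ π = π) (u : C ⟶ ∐ X) :
    ∃ (i : ℕ) (g : C ⟶ X i), u ≫ π = g ≫ Sigma.ι X i ≫ π := by
  obtain ⟨p, rfl⟩ := hC u
  induction p using DFinsupp.induction with
  | h0 => exact ⟨0, 0, by simp⟩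
  | ha j b r _ _ ih =>
    obtain ⟨i, g, hg⟩ := ih
    obtain ⟨s, hs⟩ := exists_ι_comp_eq_of_le φ hπ (le_max_left j i)
    obtain ⟨t, ht⟩ := exists_ι_comp_eq_of_le φ hπ (le_max_right j i)
    refine ⟨max j i, b ≫ s + g ≫ t, ?_⟩
    rw [map_add, sigmaHomOfDFinsupp_single, Preadditive.add_comp, hg, Category.assoc, hs, ht,
      Preadditive.add_comp, Category.assoc, Category.assoc]

end Telescope

/-- In a triangulated category with coproducts, every morphism from a compact
object `C` to the homotopy colimit of a telescope `X₁ → X₂ → ⋯` (defined by the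
triangle `⊕Xₙ --(1−shift)--> ⊕Xₙ → hocolim`) factors through some `Xᵢ`. -/
theorem stmt5 {T : Type*} [Category T] [Preadditive T] [HasZeroObject T]
    [HasShift T ℤ] [∀ n : ℤ, (shiftFunctor T n).Additive] [Pretriangulated T]
    [HasCoproducts.{0} T]
    (C : T)
    -- `C` is compact: `Hom(C, −)` commutes with arbitrary coproducts
    (hC : ∀ (J : Type) (_ : DecidableEq J) (Y : J → T),
      Function.Bijective (fun p : Π₀ j : J, (C ⟶ Y j) =>
        DFinsupp.sumAddHom
          (fun j => AddMonoidHom.mk' (fun g : C ⟶ Y j => g ≫ Sigma.ι Y j)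
            (fun a b => by simp [Preadditive.add_comp])) p))
    (X : ℕ → T) (φ : ∀ n, X n ⟶ X (n + 1)) (H : T)
    (π : (∐ X) ⟶ H) (δ : H ⟶ (∐ X)⟦(1 : ℤ)⟧)
    (htri : Triangle.mk
      (𝟙 (∐ X) - Sigma.desc fun n => φ n ≫ Sigma.ι X (n + 1)) π δ ∈ distTriang T)
    (f : C ⟶ H) :
    ∃ (i : ℕ) (g : C ⟶ X i), f = g ≫ Sigma.ι X i ≫ π := by
  have hδ : δ ≫ (shiftFunctor T (1 : ℤ)).map (𝟙 _ - telescopeShift X φ) = 0 :=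
    comp_distTriang_mor_zero₃₁ _ htri
  have hfδ : f ≫ δ = 0 :=
    eq_zero_of_comp_map_one_sub_telescopeShift (shiftFunctor T (1 : ℤ)) (hC ℕ _ _) φ
      (by rw [Category.assoc, hδ, comp_zero])
  obtain ⟨u, rfl⟩ := Triangle.coyoneda_exact₃ _ htri f hfδ
  have hπ : telescopeShift X φ ≫ π = π := by
    have h : (𝟙 _ - telescopeShift X φ) ≫ π = 0 := comp_distTriang_mor_zero₁₂ _ htri
    rwa [Preadditive.sub_comp, Category.id_comp, sub_eq_zero, eq_comm] at h
  exact exists_comp_eq_of_surjective_sigmaHomOfDFinsupp (hC ℕ _ X).2 φ hπ u
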